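/- Let Ω : X → ω be a homogeneous centralizer on a Banach sequence space X with unconditional basis, i.e. ‖Ω(ax) - aΩ(x)‖_X ≤ C‖a‖_∞‖x‖_X for all a ∈ ℓ_∞, x ∈ X. Then the sequence (v_{2j})_{j≥1} = ((0,e_j))_{j≥1} is an unconditional basic sequence in the derived space d_Ω X with the quasi-norm ‖(x,y)‖ = ‖x - Ω(y)‖ + ‖y‖. -/
import Mathlib



open scoped ENNReal
open MeasureTheory

noncomputable section

/-- `ω`, the space of all scalar sequences. -/
abbrev SeqW := ℕ → ℂ

/-- An extended-real-valued norm on `ω` whose finiteness domain is a Banach sequence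
space in which the coordinate basis is (1-)unconditional. -/
structure SeqNorm where
  N : SeqW → ℝ≥0∞
  map_zero : N 0 = 0
  map_smul : ∀ (c : ℂ) (x : SeqW), N (c • x) = (‖c‖₊ : ℝ≥0∞) * N x
  map_add_le : ∀ x y : SeqW, N (x + y) ≤ N x + N y
  uncond : ∀ (a : ℕ → ℂ) (x : SeqW), (∀ n, ‖a n‖ ≤ 1) → N (fun n => a n * x n) ≤ N x

/-- The closed strip `0 ≤ Re z ≤ 1`. -/
def Strip : Set ℂ := {z | 0 ≤ z.re ∧ z.re ≤ 1}

/-- Membership in the Calderón space `𝓕(X₀,X₁)` of the couple given by `N₀, N₁`: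
bounded continuous `ω`-valued functions on the strip, analytic in the interior,
with boundary values bounded in `X₀` resp. `X₁`. -/
structure IsCalderon (N₀ N₁ : SeqNorm) (F : ℂ → SeqW) : Prop where
  cont : ∀ n, ContinuousOn (fun z => F z n) Strip
  analytic : ∀ n, DifferentiableOn ℂ (fun z => F z n) (interior Strip)
  bddCoord : ∀ n, ∃ M : ℝ, ∀ z ∈ Strip, ‖F z n‖ ≤ M
  bdd0 : ∃ M : ℝ≥0∞, M ≠ ⊤ ∧ ∀ t : ℝ, N₀.N (F (Complex.I * (t : ℂ))) ≤ M
  bdd1 : ∃ M : ℝ≥0∞, M ≠ ⊤ ∧ ∀ t : ℝ, N₁.N (F (1 + Complex.I * (t : ℂ))) ≤ M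

/-- The Calderón norm `‖F‖_𝓕 = max (sup_t ‖F(it)‖₀, sup_t ‖F(1+it)‖₁)`. -/
def calNorm (N₀ N₁ : SeqNorm) (F : ℂ → SeqW) : ℝ≥0∞ :=
  max (⨆ t : ℝ, N₀.N (F (Complex.I * (t : ℂ))))
      (⨆ t : ℝ, N₁.N (F (1 + Complex.I * (t : ℂ))))

/-- Density of the Poisson kernel of the strip on the boundary line `Re z = 0`. -/
def P0 (θ t : ℝ) : ℝ :=
  Real.exp (-Real.pi * t) * Real.sin (Real.pi * θ) /
    ((Real.exp (-Real.pi * t) - Real.cos (Real.pi * θ)) ^ 2 + Real.sin (Real.pi * θ) ^ 2)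

/-- Density of the Poisson kernel of the strip on the boundary line `Re z = 1`. -/
def P1 (θ t : ℝ) : ℝ :=
  Real.exp (-Real.pi * t) * Real.sin (Real.pi * θ) /
    ((Real.exp (-Real.pi * t) + Real.cos (Real.pi * θ)) ^ 2 + Real.sin (Real.pi * θ) ^ 2)

/-- The Calderón norm `‖F‖_{𝓕_θ} = ∫‖F(it)‖₀ dP₀(θ,t) + ∫‖F(1+it)‖₁ dP₁(θ,t)`. -/
def calNormAt (N₀ N₁ : SeqNorm) (θ : ℝ) (F : ℂ → SeqW) : ℝ≥0∞ :=
  (∫⁻ t : ℝ, N₀.N (F (Complex.I * (t : ℂ))) * ENNReal.ofReal (P0 θ t)) +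
  (∫⁻ t : ℝ, N₁.N (F (1 + Complex.I * (t : ℂ))) * ENNReal.ofReal (P1 θ t))

/-- The complex interpolation norm of `X_θ = (X₀,X₁)_θ`. -/
def interpNorm (N₀ N₁ : SeqNorm) (θ : ℝ) (x : SeqW) : ℝ≥0∞ :=
  ⨅ F : {F : ℂ → SeqW // IsCalderon N₀ N₁ F ∧ F (θ : ℂ) = x}, calNorm N₀ N₁ F.1

/-- Coordinatewise derivative `δ'_θ F = F'(θ)`. -/
def calDeriv (F : ℂ → SeqW) (θ : ℝ) : SeqW := fun n => deriv (fun z => F z n) (θ : ℂ)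

/-- The Rademacher average `𝔼‖∑ εⱼ bⱼ‖` for an extended-valued norm. -/
def eRadAvg (N : SeqW → ℝ≥0∞) {n : ℕ} (b : Fin n → SeqW) : ℝ≥0∞ :=
  (2 ^ n : ℝ≥0∞)⁻¹ *
    ∑ ε : Fin n → Bool, N (∑ j, (if ε j then (1 : ℂ) else -1) • b j)

/-- `a` is an admissible Rademacher type-2 constant at level `n`. -/
def eTypeConst2 (N : SeqW → ℝ≥0∞) (n : ℕ) (a : ℝ≥0∞) : Prop :=
  ∀ b : Fin n → SeqW, eRadAvg N b ≤ a * (∑ j, N (b j) ^ 2) ^ (1 / 2 : ℝ)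

/-- `a = a_{n,2}`, the least Rademacher type-2 constant at level `n`. -/
def IsLeastTypeConst2 (N : SeqW → ℝ≥0∞) (n : ℕ) (a : ℝ≥0∞) : Prop :=
  eTypeConst2 N n a ∧ ∀ a' : ℝ≥0∞, eTypeConst2 N n a' → a ≤ a'

end

/-- for a homogeneous centralizer `Ω` on a sequence space `X` with
unconditional basis, the sequence `(v_{2j}) = ((0, e_j))` is unconditional in the
derived space `d_Ω X` with quasi-norm `‖(x,y)‖ = ‖x - Ω y‖ + ‖y‖`: multiplying the
coefficients by unimodular scalars changes the quasi-norm of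
`∑ λ_j v_{2j} = (0, λ)` by at most a uniform factor. -/
theorem stmt4 (X : SeqNorm) (Ω : SeqW → SeqW) (C : ℝ≥0∞) (hC : C ≠ ⊤)
    (hhom : ∀ (c : ℂ) (x : SeqW), Ω (c • x) = c • Ω x)
    (hcent : ∀ (a : ℕ → ℂ) (x : SeqW),
        X.N (Ω (fun n => a n * x n) - fun n => a n * Ω x n)
          ≤ C * (⨆ n, (‖a n‖₊ : ℝ≥0∞)) * X.N x) :
    ∃ K : ℝ≥0∞, K ≠ ⊤ ∧
      ∀ (lam ε : ℕ → ℂ), (Function.support lam).Finite → (∀ n, ‖ε n‖ = 1) →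
        X.N (Ω (fun n => ε n * lam n)) + X.N (fun n => ε n * lam n)
          ≤ K * (X.N (Ω lam) + X.N lam) := by
  refine ⟨C + 1, by simp [hC], fun lam ε _ hε => ?_⟩
  have hεle : ∀ n, ‖ε n‖ ≤ 1 := fun n => le_of_eq (hε n)
  have hsup : (⨆ n, (‖ε n‖₊ : ℝ≥0∞)) = 1 := by
    have : ∀ n, (‖ε n‖₊ : ℝ≥0∞) = 1 := by
      intro n
      have : ‖ε n‖₊ = 1 := by
        ext; simpa using hε n
      simp [this]
    simp [this]
  have h1 : X.N (Ω (fun n => ε n * lam n) - fun n => ε n * Ω lam n)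
      ≤ C * X.N lam := by
    have := hcent ε lam
    rwa [hsup, mul_one] at this
  have h2 : X.N (fun n => ε n * Ω lam n) ≤ X.N (Ω lam) := X.uncond ε (Ω lam) hεle
  have h3 : X.N (fun n => ε n * lam n) ≤ X.N lam := X.uncond ε lam hεle
  have h4 : X.N (Ω (fun n => ε n * lam n)) ≤ C * X.N lam + X.N (Ω lam) := by
    have heq : Ω (fun n => ε n * lam n)
        = (Ω (fun n => ε n * lam n) - fun n => ε n * Ω lam n)
          + (fun n => ε n * Ω lam n) := by
      funext n; simp
    calc X.N (Ω (fun n => ε n * lam n))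
        ≤ X.N (Ω (fun n => ε n * lam n) - fun n => ε n * Ω lam n)
          + X.N (fun n => ε n * Ω lam n) := by
          conv_lhs => rw [heq]
          exact X.map_add_le _ _
      _ ≤ C * X.N lam + X.N (Ω lam) := add_le_add h1 h2
  calc X.N (Ω (fun n => ε n * lam n)) + X.N (fun n => ε n * lam n)
      ≤ (C * X.N lam + X.N (Ω lam)) + X.N lam := add_le_add h4 h3
    _ ≤ (C + 1) * (X.N (Ω lam) + X.N lam) := by
        rw [add_mul, one_mul, mul_add]
        calc C * X.N lam + X.N (Ω lam) + X.N lam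
            ≤ (C * X.N (Ω lam) + C * X.N lam) + (X.N (Ω lam) + X.N lam) := by
              rw [add_assoc]
              exact add_le_add (le_add_left le_rfl) le_rfl
          _ = _ := rfl
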